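/- The equation A ⊗ X ⊕ X ⊗ B = C (with A m×m, B n×n, C m×n over max-plus algebra) is solvable if and only if X* = (A♯ ⊗' C) ⊕' (C ⊗' B♯) is a solution, in which case X* is the maximum solution. -/

import Mathlib

/-- Min-plus addition on `EReal`: agrees with `+` on finite values, with `⊤` absorbing. -/
noncomputable def mpAdd (a b : EReal) : EReal := -((-a) + (-b))

/-- Max-plus matrix multiplication. -/
noncomputable def maxMul {α β γ : Type*} [Fintype β]
    (A : Matrix α β EReal) (B : Matrix β γ EReal) : Matrix α γ EReal :=
  fun i j => ⨆ k, A i k + B k j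

/-- Min-plus matrix multiplication. -/
noncomputable def minMul {α β γ : Type*} [Fintype β]
    (A : Matrix α β EReal) (B : Matrix β γ EReal) : Matrix α γ EReal :=
  fun i j => ⨅ k, mpAdd (A i k) (B k j)

/-- Max-plus matrix-vector multiplication. -/
noncomputable def maxMulVec {α β : Type*} [Fintype β]
    (A : Matrix α β EReal) (x : β → EReal) : α → EReal :=
  fun i => ⨆ j, A i j + x j

/-- Min-plus matrix-vector multiplication. -/
noncomputable def minMulVec {α β : Type*} [Fintype β]
    (A : Matrix α β EReal) (x : β → EReal) : α → EReal :=
  fun i => ⨅ j, mpAdd (A i j) (x j)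

/-- Conjugate `A♯ = -Aᵀ` (sending `-∞` to `+∞` and vice versa). -/
noncomputable def conj {α β : Type*} (A : Matrix α β EReal) : Matrix β α EReal :=
  fun j i => -(A i j)

/-- Max-plus Kronecker product: block `(i,k),(j,l)` entry is `A i j + B k l`. -/
noncomputable def kron {α β γ δ : Type*} (A : Matrix α β EReal) (B : Matrix γ δ EReal) :
    Matrix (α × γ) (β × δ) EReal :=
  fun ik jl => A ik.1 jl.1 + B ik.2 jl.2

/-- Min-plus Kronecker product. -/
noncomputable def minKron {α β γ δ : Type*} (A : Matrix α β EReal) (B : Matrix γ δ EReal) :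
    Matrix (α × γ) (β × δ) EReal :=
  fun ik jl => mpAdd (A ik.1 jl.1) (B ik.2 jl.2)

/-- Column-stacking vectorization: `vec X (j, i) = X i j`. -/
def vec {α β : Type*} (X : Matrix α β EReal) : β × α → EReal := fun p => X p.2 p.1

/-- Entries lie in `ℝ ∪ {-∞}`, i.e. no `+∞` entries. -/
def RMaxEntries {α β : Type*} (A : Matrix α β EReal) : Prop := ∀ i j, A i j ≠ ⊤

/-- Doubly ℝ-astic: entries in `ℝ ∪ {-∞}`, with a finite entry in each row and column. -/
def DoublyRAstic {α β : Type*} (A : Matrix α β EReal) : Prop :=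
  (∀ i j, A i j ≠ ⊤) ∧ (∀ i, ∃ j, A i j ≠ ⊥) ∧ (∀ j, ∃ i, A i j ≠ ⊥)

/-- All entries of the matrix are finite reals. -/
def FiniteEntries {α β : Type*} (C : Matrix α β EReal) : Prop :=
  ∀ i j, ∃ r : ℝ, C i j = (r : EReal)

/-- All entries of the vector are finite reals. -/
def FiniteVec {α : Type*} (b : α → EReal) : Prop := ∀ i, ∃ r : ℝ, b i = (r : EReal)

/-!
The map `X ↦ A ⊗ X ⊕ X ⊗ B` is residuated when `C` is finite: `A ⊗ X ⊕ X ⊗ B ≤ C` holds exactly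
when `X ≤ X* = (A♯ ⊗' C) ⊕' (C ⊗' B♯)`. Hence `X*` is the greatest subsolution, and any solution `X`
gives `C = A ⊗ X ⊕ X ⊗ B ≤ A ⊗ X* ⊕ X* ⊗ B ≤ C`. A finite entry in every column of `A` keeps
`X*` below `+∞`.
-/

noncomputable def sylvester {α β : Type*} [Fintype α] [Fintype β] (A : Matrix α α EReal)
    (B : Matrix β β EReal) (X : Matrix α β EReal) : Matrix α β EReal :=
  fun i j => maxMul A X i j ⊔ maxMul X B i j

noncomputable def sylvesterPrincipal {α β : Type*} [Fintype α] [Fintype β] (A : Matrix α α EReal)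
    (B : Matrix β β EReal) (C : Matrix α β EReal) : Matrix α β EReal :=
  fun i j => minMul (conj A) C i j ⊓ minMul C (conj B) i j

lemma mpAdd_comm (a b : EReal) : mpAdd a b = mpAdd b a := by
  simp only [mpAdd, add_comm]

/-- Residuation of `a + ·` against a finite bound; it needs no finiteness of `a` or `x`, since
`⊥ + ⊤ = ⊥` in `EReal`. -/
lemma le_mpAdd_neg_coe_iff {a x : EReal} {c : ℝ} : x ≤ mpAdd (-a) c ↔ a + x ≤ c := by
  induction a using EReal.rec <;> induction x using EReal.rec <;> simp [mpAdd]
  norm_cast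
  constructor <;> intro <;> linarith

lemma mpAdd_neg_coe_ne_top {a : EReal} (ha : a ≠ ⊥) (c : ℝ) : mpAdd (-a) c ≠ ⊤ := by
  simp [mpAdd, ha]

section Residuation

variable {α β γ : Type*}

lemma maxMul_le_iff_le_minMul_conj_left [Fintype α] [Fintype β] {A : Matrix α β EReal}
    {X : Matrix β γ EReal} {C : Matrix α γ EReal} (hC : FiniteEntries C) :
    (∀ i j, maxMul A X i j ≤ C i j) ↔ ∀ k j, X k j ≤ minMul (conj A) C k j := by
  have key : ∀ i j k, A i k + X k j ≤ C i j ↔ X k j ≤ mpAdd (-A i k) (C i j) := by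
    intro i j k
    obtain ⟨c, hc⟩ := hC i j
    rw [hc, le_mpAdd_neg_coe_iff]
  simp only [maxMul, minMul, conj, iSup_le_iff, le_iInf_iff, key]
  exact ⟨fun h k j i => h i j k, fun h i j k => h k j i⟩

lemma maxMul_le_iff_le_minMul_conj_right [Fintype β] [Fintype γ] {X : Matrix α β EReal}
    {B : Matrix β γ EReal} {C : Matrix α γ EReal} (hC : FiniteEntries C) :
    (∀ i j, maxMul X B i j ≤ C i j) ↔ ∀ i k, X i k ≤ minMul C (conj B) i k := by
  have key : ∀ i j k, X i k + B k j ≤ C i j ↔ X i k ≤ mpAdd (C i j) (-B k j) := by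
    intro i j k
    obtain ⟨c, hc⟩ := hC i j
    rw [hc, mpAdd_comm, le_mpAdd_neg_coe_iff, add_comm]
  simp only [maxMul, minMul, conj, iSup_le_iff, le_iInf_iff, key]
  exact ⟨fun h i k j => h i j k, fun h i j k => h i k j⟩

lemma maxMul_mono [Fintype β] {A A' : Matrix α β EReal} {X X' : Matrix β γ EReal}
    (hA : ∀ i k, A i k ≤ A' i k) (hX : ∀ k j, X k j ≤ X' k j) (i : α) (j : γ) :
    maxMul A X i j ≤ maxMul A' X' i j :=
  iSup_mono fun k => add_le_add (hA i k) (hX k j)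

end Residuation

section Sylvester

variable {α β : Type*} [Fintype α] [Fintype β]
  {A : Matrix α α EReal} {B : Matrix β β EReal} {C : Matrix α β EReal}

lemma sylvester_le_iff_le_sylvesterPrincipal (hC : FiniteEntries C) {X : Matrix α β EReal} :
    (∀ i j, sylvester A B X i j ≤ C i j) ↔ ∀ i j, X i j ≤ sylvesterPrincipal A B C i j := by
  simp only [sylvester, sylvesterPrincipal, sup_le_iff, le_inf_iff, forall_and]
  rw [maxMul_le_iff_le_minMul_conj_left hC, maxMul_le_iff_le_minMul_conj_right hC]

lemma le_sylvesterPrincipal_of_sylvester_eq (hC : FiniteEntries C) {X : Matrix α β EReal}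
    (hX : sylvester A B X = C) (i : α) (j : β) : X i j ≤ sylvesterPrincipal A B C i j :=
  (sylvester_le_iff_le_sylvesterPrincipal hC).1 (fun i j => by rw [hX]) i j

lemma sylvester_mono {X X' : Matrix α β EReal} (h : ∀ i j, X i j ≤ X' i j) (i : α) (j : β) :
    sylvester A B X i j ≤ sylvester A B X' i j :=
  sup_le_sup (maxMul_mono (fun _ _ => le_rfl) h i j) (maxMul_mono h (fun _ _ => le_rfl) i j)

lemma sylvester_sylvesterPrincipal_eq_of_eq (hC : FiniteEntries C) {X : Matrix α β EReal}
    (hX : sylvester A B X = C) : sylvester A B (sylvesterPrincipal A B C) = C := by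
  have hle : ∀ i j, sylvester A B (sylvesterPrincipal A B C) i j ≤ C i j :=
    (sylvester_le_iff_le_sylvesterPrincipal hC).2 fun _ _ => le_rfl
  funext i j
  refine le_antisymm (hle i j) ?_
  calc C i j = sylvester A B X i j := by rw [hX]
    _ ≤ sylvester A B (sylvesterPrincipal A B C) i j :=
      sylvester_mono (le_sylvesterPrincipal_of_sylvester_eq hC hX) i j

lemma rMaxEntries_sylvesterPrincipal (hA : ∀ j, ∃ i, A i j ≠ ⊥) (hC : FiniteEntries C) :
    RMaxEntries (sylvesterPrincipal A B C) := by
  intro i j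
  obtain ⟨k, hk⟩ := hA i
  obtain ⟨c, hc⟩ := hC k j
  refine ne_top_of_le_ne_top (mpAdd_neg_coe_ne_top hk c) ?_
  rw [← hc]
  exact inf_le_left.trans (iInf_le _ k)

end Sylvester

theorem stmt13_general {m n : ℕ} (A : Matrix (Fin m) (Fin m) EReal) (B : Matrix (Fin n) (Fin n) EReal)
    (C : Matrix (Fin m) (Fin n) EReal)
    (hA : DoublyRAstic A) (hC : FiniteEntries C) :
    ((∃ X : Matrix (Fin m) (Fin n) EReal, RMaxEntries X ∧
        (fun i j => maxMul A X i j ⊔ maxMul X B i j) = C) ↔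
      (fun i j =>
          maxMul A (fun i' j' => minMul (conj A) C i' j' ⊓ minMul C (conj B) i' j') i j ⊔
          maxMul (fun i' j' => minMul (conj A) C i' j' ⊓ minMul C (conj B) i' j') B i j) = C) ∧
    (∀ X : Matrix (Fin m) (Fin n) EReal, RMaxEntries X →
      (fun i j => maxMul A X i j ⊔ maxMul X B i j) = C →
      ∀ i j, X i j ≤ minMul (conj A) C i j ⊓ minMul C (conj B) i j) :=
  ⟨⟨fun ⟨_, _, hX⟩ => sylvester_sylvesterPrincipal_eq_of_eq hC hX,
      fun hP => ⟨_, rMaxEntries_sylvesterPrincipal hA.2.2 hC, hP⟩⟩,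
    fun _ _ hX => le_sylvesterPrincipal_of_sylvester_eq hC hX⟩

theorem stmt13 {m n : ℕ} (A : Matrix (Fin m) (Fin m) EReal) (B : Matrix (Fin n) (Fin n) EReal)
    (C : Matrix (Fin m) (Fin n) EReal)
    (hA : DoublyRAstic A) (hB : DoublyRAstic B) (hC : FiniteEntries C) :
    ((∃ X : Matrix (Fin m) (Fin n) EReal, RMaxEntries X ∧
        (fun i j => maxMul A X i j ⊔ maxMul X B i j) = C) ↔
      (fun i j =>
          maxMul A (fun i' j' => minMul (conj A) C i' j' ⊓ minMul C (conj B) i' j') i j ⊔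
          maxMul (fun i' j' => minMul (conj A) C i' j' ⊓ minMul C (conj B) i' j') B i j) = C) ∧
    (∀ X : Matrix (Fin m) (Fin n) EReal, RMaxEntries X →
      (fun i j => maxMul A X i j ⊔ maxMul X B i j) = C →
      ∀ i j, X i j ≤ minMul (conj A) C i j ⊓ minMul C (conj B) i j) :=
  stmt13_general A B C hA hC
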